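/- arXiv:2008.08897 — 3 statements merged into one kernel-verified Lean document; each statement's English description precedes it below -/
import Mathlib

section
/- Stopping time decomposition for r-variation (discrete time): for any real-valued process (Π_{s,t})_{s<t} indexed by pairs of natural numbers, there exist, for each m ∈ ℕ, increasing sequences of stopping times τ^{(m)}_j (with respect to any filtration to which Π is adapted), such that for every 0 < ρ < r < ∞, the quantity sup over finite increasing sequences u_0 < ⋯ < u_L of Σ_{l=1}^{L} |Π_{u_{l-1},u_l}|^r is bounded by (Π^*)^r/(1−2^{−r}) + 2^ρ Σ_{m=0}^{∞} (2^{−m}Π^*)^{r−ρ} Σ_{j=1}^{∞} (sup_{τ^{(m)}_{j-1} ≤ t < τ^{(m)}_j} |Π_{t, τ^{(m)}_j}|)^ρ, where Π^* := sup_{0 ≤ n < n'} |Π_{n,n'}|. -/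
/-!
Fix `ω` and write `Π = P · · ω`. An increment `(a, b)` of size `A > 0` gets the level `m` with
`2^{-m-1} Π^*_b ≤ A ≤ 2^{-m} Π^*_b` and the index `j` with `τ^{(m)}_j ≤ b < τ^{(m)}_{j+1}`.
If `τ^{(m)}_{j+1} < ∞`, the stopping rule fired there, so the oscillation over
`[τ^{(m)}_j, τ^{(m)}_{j+1})` is at least `2^{-m-1} Π^*_{τ^{(m)}_{j+1}} ≥ A / 2`, and
`A^r ≤ 2^ρ (2^{-m} Π^*)^{r-ρ} osc^ρ`. A later increment `(a', b')` of the same level satisfies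
the stopping condition at `b'` after `τ^{(m)}_j ≤ a'`, so it gets a strictly larger index:
distinct increments are charged to distinct pairs `(m, j)`. In particular an increment with
`τ^{(m)}_{j+1} = ∞` is the last one of its level, and these contribute at most
`∑_m (2^{-m} Π^*)^r = (Π^*)^r / (1 - 2^{-r})`.
-/

open MeasureTheory ENNReal

namespace ENNReal

theorem exists_inv_two_pow_mul_le_and_le {a b : ℝ≥0∞} (ha : a ≠ 0) (hab : a ≤ b) (hb : b ≠ ⊤) :
    ∃ m : ℕ, 2⁻¹ ^ (m + 1) * b ≤ a ∧ a ≤ 2⁻¹ ^ m * b := by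
  classical
  have hex : ∃ m : ℕ, 2⁻¹ ^ (m + 1) * b ≤ a := by
    obtain ⟨m, hm⟩ := exists_inv_two_pow_lt (ENNReal.div_ne_zero.2 ⟨ha, hb⟩)
    refine ⟨m, le_of_lt ?_⟩
    calc 2⁻¹ ^ (m + 1) * b ≤ 2⁻¹ ^ m * b :=
          mul_le_mul' (pow_le_pow_right_of_le_one' (by norm_num) m.le_succ) le_rfl
      _ < a := (ENNReal.lt_div_iff_mul_lt (.inl (ha.bot_lt.trans_le hab).ne') (.inl hb)).1 hm
  refine ⟨Nat.find hex, Nat.find_spec hex, ?_⟩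
  cases h : Nat.find hex with
  | zero => simpa using hab
  | succ m => exact (not_le.1 (Nat.find_min hex (h ▸ m.lt_succ_self))).le

theorem rpow_le_two_rpow_mul_rpow_mul_rpow {a b c : ℝ≥0∞} {ρ r : ℝ} (hρ : 0 ≤ ρ) (hρr : ρ ≤ r)
    (hab : a ≤ b) (hac : a ≤ 2 * c) : a ^ r ≤ 2 ^ ρ * b ^ (r - ρ) * c ^ ρ := calc
  a ^ r = a ^ (r - ρ) * a ^ ρ := by
    rw [← rpow_add_of_nonneg _ _ (sub_nonneg.2 hρr) hρ, sub_add_cancel]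
  _ ≤ b ^ (r - ρ) * (2 * c) ^ ρ := by gcongr
  _ = 2 ^ ρ * b ^ (r - ρ) * c ^ ρ := by rw [mul_rpow_of_nonneg _ _ hρ]; ring

theorem tsum_rpow_neg_natCast_mul_rpow (M : ℝ≥0∞) {r : ℝ} (hr : 0 ≤ r) :
    ∑' m : ℕ, (2 ^ (-(m : ℝ)) * M) ^ r = M ^ r / (1 - 2 ^ (-r)) := by
  have hterm (m : ℕ) : (2 ^ (-(m : ℝ)) * M) ^ r = (2 ^ (-r)) ^ m * M ^ r := by
    rw [mul_rpow_of_nonneg _ _ hr, ← rpow_mul, ← rpow_natCast, ← rpow_mul]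
    ring_nf
  rw [tsum_congr hterm, ENNReal.tsum_mul_right, ENNReal.tsum_geometric, ENNReal.div_eq_inv_mul]

theorem sum_comp_le_tsum_of_injOn {ι κ : Type*} [DecidableEq κ] {s : Finset ι} {g : ι → κ}
    (hg : Set.InjOn g s) (f : κ → ℝ≥0∞) : ∑ i ∈ s, f (g i) ≤ ∑' k, f k := by
  rw [← Finset.sum_image hg]
  exact ENNReal.sum_le_tsum _

end ENNReal

theorem exists_le_lt_succ_of_le_of_lt {α : Type*} [LinearOrder α] {f : ℕ → α} {b : α} {k : ℕ}
    (h0 : f 0 ≤ b) (hk : b < f k) : ∃ j, f j ≤ b ∧ b < f (j + 1) := by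
  induction k with
  | zero => exact absurd h0 (not_le.2 hk)
  | succ k ih =>
    by_cases hfk : f k ≤ b
    · exact ⟨k, hfk, hk⟩
    · exact ih (not_le.1 hfk)

theorem Finset.measurable_sup {ι δ α : Type*} {mδ : MeasurableSpace δ} [SemilatticeSup α]
    [OrderBot α] [MeasurableSpace α] [MeasurableSup₂ α] {s : Finset ι} {f : ι → δ → α}
    (hf : ∀ i ∈ s, Measurable (f i)) : Measurable fun y => s.sup fun i => f i y := by
  simp_rw [← Finset.sup_apply]
  exact Finset.sup_induction measurable_const (fun _ hg _ hh => hg.sup hh) hf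

theorem Set.injOn_of_lt_imp_ne {α β : Type*} [LinearOrder α] {s : Set α} {f : α → β}
    (h : ∀ x ∈ s, ∀ y ∈ s, x < y → f x ≠ f y) : Set.InjOn f s := fun x hx y hy hxy => by
  rcases lt_trichotomy x y with hlt | rfl | hlt
  exacts [absurd hxy (h x hx y hy hlt), rfl, absurd hxy.symm (h y hy x hx hlt)]

-- In the application `p k i` means `τ^{(k)}_{i+1} < ∞`; by `hlater` the indices without `p` are
-- at most one per level, whence the term `∑' k, b k ^ r`.
theorem sum_rpow_le_of_charging {ι : Type*} [LinearOrder ι] (s : Finset ι) {a : ι → ℝ≥0∞}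
    {b : ℕ → ℝ≥0∞} {c : ℕ → ℕ → ℝ≥0∞} {p : ℕ → ℕ → Prop} {m j : ι → ℕ} {ρ r : ℝ}
    (hρ : 0 ≤ ρ) (hρr : ρ ≤ r) (hb : ∀ l ∈ s, a l ≤ b (m l))
    (hc : ∀ l ∈ s, p (m l) (j l) → a l ≤ 2 * c (m l) (j l))
    (hlater : ∀ l ∈ s, ∀ l' ∈ s, l < l' → m l = m l' → j l < j l' ∧ p (m l) (j l)) :
    ∑ l ∈ s, a l ^ r ≤ ∑' k, b k ^ r + 2 ^ ρ * ∑' k, b k ^ (r - ρ) * ∑' i, c k i ^ ρ := by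
  classical
  rw [← Finset.sum_filter_not_add_sum_filter s (fun l => p (m l) (j l))]
  gcongr ?_ + ?_
  · have hinj : Set.InjOn m (s.filter fun l => ¬p (m l) (j l)) := by
      refine Set.injOn_of_lt_imp_ne fun l hl l' hl' hll' hm => ?_
      rw [Finset.coe_filter] at hl hl'
      exact hl.2 (hlater l hl.1 l' hl'.1 hll' hm).2
    calc ∑ l ∈ s.filter fun l => ¬p (m l) (j l), a l ^ r
        ≤ ∑ l ∈ s.filter fun l => ¬p (m l) (j l), b (m l) ^ r :=
          Finset.sum_le_sum fun l hl =>
            rpow_le_rpow (hb l (Finset.mem_filter.1 hl).1) (hρ.trans hρr)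
      _ ≤ ∑' k, b k ^ r := ENNReal.sum_comp_le_tsum_of_injOn hinj _
  · have hinj : Set.InjOn (fun l => (m l, j l)) s :=
      Set.injOn_of_lt_imp_ne fun l hl l' hl' hll' hmj =>
        (hlater l hl l' hl' hll' (Prod.ext_iff.1 hmj).1).1.ne (Prod.ext_iff.1 hmj).2
    calc ∑ l ∈ s.filter fun l => p (m l) (j l), a l ^ r
        ≤ ∑ l ∈ s.filter fun l => p (m l) (j l), 2 ^ ρ * b (m l) ^ (r - ρ) * c (m l) (j l) ^ ρ :=
          Finset.sum_le_sum fun l hl => by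
            obtain ⟨hls, hp⟩ := Finset.mem_filter.1 hl
            exact rpow_le_two_rpow_mul_rpow_mul_rpow hρ hρr (hb l hls) (hc l hls hp)
      _ ≤ ∑' q : ℕ × ℕ, 2 ^ ρ * b q.1 ^ (r - ρ) * c q.1 q.2 ^ ρ :=
          ENNReal.sum_comp_le_tsum_of_injOn (hinj.mono (Finset.filter_subset _ s))
            (fun q : ℕ × ℕ => 2 ^ ρ * b q.1 ^ (r - ρ) * c q.1 q.2 ^ ρ)
      _ = 2 ^ ρ * ∑' k, b k ^ (r - ρ) * ∑' i, c k i ^ ρ := by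
          simp_rw [ENNReal.tsum_prod', mul_assoc, ENNReal.tsum_mul_left]

namespace StoppingTimeDecomposition

open Finset

variable (x : ℕ → ℕ → ℝ)

-- For the path `x = Π`: `runningMax x t` is `Π^*_t` and `stoppingTime x m j` is `τ^{(m)}_j`,
-- which is `⊤` once the stopping condition `Triggers` never holds again.
noncomputable def runningMax (t : ℕ) : ℝ≥0∞ :=
  (range (t + 1)).sup fun n' => (range n').sup fun n => ENNReal.ofReal |x n n'|

noncomputable def totalMax : ℝ≥0∞ :=
  ⨆ (n : ℕ) (n' : ℕ) (_ : n < n'), ENNReal.ofReal |x n n'|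

def Triggers (m : ℕ) (s : ℕ∞) (t : ℕ) : Prop :=
  ∃ t' : ℕ, s ≤ t' ∧ t' < t ∧ 2⁻¹ ^ (m + 1) * runningMax x t ≤ ENNReal.ofReal |x t' t|

open scoped Classical in
noncomputable def nextTime (m : ℕ) (s : ℕ∞) : ℕ∞ :=
  if h : ∃ t, Triggers x m s t then (Nat.find h : ℕ∞) else ⊤

noncomputable def stoppingTime (m : ℕ) : ℕ → ℕ∞
  | 0 => 0
  | j + 1 => nextTime x m (stoppingTime m j)

-- Zero when `τ^{(m)}_{j+1} = ⊤`, the supremum being empty.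
noncomputable def oscillation (m j : ℕ) : ℝ≥0∞ :=
  ⨆ (t' : ℕ) (_ : (t' : ℕ∞) = stoppingTime x m (j + 1))
    (t : ℕ) (_ : stoppingTime x m j ≤ t) (_ : t < t'), ENNReal.ofReal |x t t'|

variable {x}

theorem le_runningMax {n n' t : ℕ} (h : n < n') (h' : n' ≤ t) :
    ENNReal.ofReal |x n n'| ≤ runningMax x t :=
  le_sup_of_le (mem_range_succ_iff.2 h')
    (le_sup (f := fun n => ENNReal.ofReal |x n n'|) (mem_range.2 h))

theorem runningMax_mono : Monotone (runningMax x) := fun _ _ h =>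
  sup_mono (range_subset_range.2 (Nat.succ_le_succ h))

theorem runningMax_ne_top (t : ℕ) : runningMax x t ≠ ⊤ := by
  simp [runningMax, ← lt_top_iff_ne_top, Finset.sup_lt_iff]

theorem runningMax_le_totalMax (t : ℕ) : runningMax x t ≤ totalMax x :=
  Finset.sup_le fun n' _ => Finset.sup_le fun n hn =>
    le_iSup₂_of_le n n' (le_iSup_of_le (mem_range.1 hn) le_rfl)

theorem nextTime_le {m : ℕ} {s : ℕ∞} {t : ℕ} (h : Triggers x m s t) : nextTime x m s ≤ t := by
  classical
  rw [nextTime, dif_pos ⟨t, h⟩]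
  exact_mod_cast Nat.find_le h

theorem triggers_of_nextTime_eq {m : ℕ} {s : ℕ∞} {t : ℕ} (h : nextTime x m s = t) :
    Triggers x m s t := by
  classical
  rw [nextTime] at h
  split_ifs at h with hex
  · exact Nat.cast_injective h ▸ Nat.find_spec hex
  · exact absurd h (ENat.top_ne_natCast t)

theorem nextTime_le_iff {m : ℕ} {s : ℕ∞} {n : ℕ} :
    nextTime x m s ≤ n ↔ ∃ t ≤ n, Triggers x m s t := by
  refine ⟨fun h => ?_, fun ⟨t, htn, ht⟩ => (nextTime_le ht).trans (Nat.cast_le.2 htn)⟩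
  obtain ⟨t, ht⟩ := ENat.ne_top_iff_exists.1 (ne_top_of_le_ne_top (ENat.natCast_ne_top n) h)
  exact ⟨t, Nat.cast_le.1 (ht ▸ h), triggers_of_nextTime_eq ht.symm⟩

theorem lt_nextTime {m : ℕ} {s : ℕ∞} (hs : s ≠ ⊤) : s < nextTime x m s := by
  classical
  rw [nextTime]
  split_ifs with hex
  · obtain ⟨t', hst', ht', -⟩ := Nat.find_spec hex
    exact hst'.trans_lt (Nat.cast_lt.2 ht')
  · exact hs.lt_top

theorem le_nextTime (m : ℕ) (s : ℕ∞) : s ≤ nextTime x m s := by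
  classical
  rw [nextTime]
  split_ifs with hex
  · obtain ⟨t', hst', ht', -⟩ := Nat.find_spec hex
    exact hst'.trans (Nat.cast_le.2 ht'.le)
  · exact le_top

theorem stoppingTime_mono (m : ℕ) : Monotone (stoppingTime x m) :=
  monotone_nat_of_le_succ fun _ => le_nextTime m _

theorem le_stoppingTime (m j : ℕ) : (j : ℕ∞) ≤ stoppingTime x m j := by
  induction j with
  | zero => simp [stoppingTime]
  | succ j ih =>
    rcases eq_or_ne (stoppingTime x m j) ⊤ with hj | hj
    · exact le_top.trans (hj.symm.trans_le (stoppingTime_mono m j.le_succ))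
    · push_cast
      exact Order.add_one_le_of_lt (ih.trans_lt (lt_nextTime hj))

theorem exists_stoppingTime_le_lt (m b : ℕ) :
    ∃ j, stoppingTime x m j ≤ b ∧ (b : ℕ∞) < stoppingTime x m (j + 1) :=
  exists_le_lt_succ_of_le_of_lt (by simp [stoppingTime])
    ((Nat.cast_lt.2 b.lt_succ_self).trans_le (le_stoppingTime m (b + 1)))

theorem stoppingTime_succ_le {m j a b : ℕ} (hj : stoppingTime x m j ≤ a) (hab : a < b)
    (hx : 2⁻¹ ^ (m + 1) * runningMax x b ≤ ENNReal.ofReal |x a b|) :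
    stoppingTime x m (j + 1) ≤ b :=
  nextTime_le ⟨a, hj, hab, hx⟩

theorem inv_two_pow_mul_runningMax_le_oscillation {m j b : ℕ}
    (hb : (b : ℕ∞) < stoppingTime x m (j + 1)) (hfin : stoppingTime x m (j + 1) ≠ ⊤) :
    2⁻¹ ^ (m + 1) * runningMax x b ≤ oscillation x m j := by
  obtain ⟨t, ht⟩ := ENat.ne_top_iff_exists.1 hfin
  obtain ⟨t', hjt', ht't, hx⟩ := triggers_of_nextTime_eq ht.symm
  calc 2⁻¹ ^ (m + 1) * runningMax x b
      ≤ 2⁻¹ ^ (m + 1) * runningMax x t := by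
        gcongr
        exact runningMax_mono (Nat.cast_lt.1 (ht ▸ hb)).le
    _ ≤ ENNReal.ofReal |x t' t| := hx
    _ ≤ oscillation x m j :=
      le_iSup₂_of_le t ht (le_iSup₂_of_le t' hjt' (le_iSup_of_le ht't le_rfl))

theorem le_two_mul_oscillation {A : ℝ≥0∞} {m j b : ℕ} (hA : A ≤ 2⁻¹ ^ m * runningMax x b)
    (hb : (b : ℕ∞) < stoppingTime x m (j + 1)) (hfin : stoppingTime x m (j + 1) ≠ ⊤) :
    A ≤ 2 * oscillation x m j := calc
  A ≤ 2⁻¹ ^ m * runningMax x b := hA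
  _ = 2 * (2⁻¹ ^ (m + 1) * runningMax x b) := by
    rw [pow_succ', ← mul_assoc, ← mul_assoc, ENNReal.mul_inv_cancel two_ne_zero ofNat_ne_top,
      one_mul]
  _ ≤ 2 * oscillation x m j := by
    gcongr
    exact inv_two_pow_mul_runningMax_le_oscillation hb hfin

theorem lt_of_stoppingTime_le_of_triggers {m j j' b a' b' : ℕ} (hj : stoppingTime x m j ≤ b)
    (hba' : b ≤ a') (hab' : a' < b')
    (hx : 2⁻¹ ^ (m + 1) * runningMax x b' ≤ ENNReal.ofReal |x a' b'|)
    (hj' : (b' : ℕ∞) < stoppingTime x m (j' + 1)) :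
    j < j' ∧ stoppingTime x m (j + 1) ≠ ⊤ := by
  have hnext : stoppingTime x m (j + 1) ≤ b' :=
    stoppingTime_succ_le (hj.trans (Nat.cast_le.2 hba')) hab' hx
  exact ⟨Nat.succ_lt_succ_iff.1 ((stoppingTime_mono m).reflect_lt (hnext.trans_lt hj')),
    ne_top_of_le_ne_top (ENat.natCast_ne_top _) hnext⟩

theorem exists_level_index {a b : ℕ} (hab : a < b) (hx : ENNReal.ofReal |x a b| ≠ 0) :
    ∃ m j, ENNReal.ofReal |x a b| ≤ 2⁻¹ ^ m * runningMax x b ∧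
      2⁻¹ ^ (m + 1) * runningMax x b ≤ ENNReal.ofReal |x a b| ∧
      stoppingTime x m j ≤ b ∧ (b : ℕ∞) < stoppingTime x m (j + 1) := by
  obtain ⟨m, hlow, hup⟩ :=
    exists_inv_two_pow_mul_le_and_le hx (le_runningMax hab le_rfl) (runningMax_ne_top b)
  obtain ⟨j, hj⟩ := exists_stoppingTime_le_lt (x := x) m b
  exact ⟨m, j, hup, hlow, hj⟩

theorem sum_rpow_increment_le {ρ r : ℝ} (hρ : 0 < ρ) (hρr : ρ < r) {L : ℕ} {u : Fin (L + 1) → ℕ}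
    (hu : StrictMono u) :
    ∑ l : Fin L, ENNReal.ofReal |x (u l.castSucc) (u l.succ)| ^ r ≤
      totalMax x ^ r / (1 - 2 ^ (-r)) + 2 ^ ρ * ∑' m : ℕ,
        (2 ^ (-(m : ℝ)) * totalMax x) ^ (r - ρ) * ∑' j, oscillation x m j ^ ρ := by
  classical
  have hr : 0 < r := hρ.trans hρr
  set A := fun l : Fin L => ENNReal.ofReal |x (u l.castSucc) (u l.succ)|
  have hinc (l : Fin L) : u l.castSucc < u l.succ := hu l.castSucc_lt_succ
  have hlevel (l : Fin L) : ∃ m j, A l ≠ 0 →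
      A l ≤ 2⁻¹ ^ m * runningMax x (u l.succ) ∧
      2⁻¹ ^ (m + 1) * runningMax x (u l.succ) ≤ A l ∧
      stoppingTime x m j ≤ u l.succ ∧ (u l.succ : ℕ∞) < stoppingTime x m (j + 1) := by
    by_cases h : A l = 0
    · exact ⟨0, 0, fun h' => absurd h h'⟩
    · obtain ⟨m, j, hmj⟩ := exists_level_index (hinc l) h
      exact ⟨m, j, fun _ => hmj⟩
  choose m j hmj using hlevel
  rw [← tsum_rpow_neg_natCast_mul_rpow _ hr.le, ← Finset.sum_filter_ne_zero]
  have hne {l : Fin L} (hl : l ∈ univ.filter fun l => A l ^ r ≠ 0) : A l ≠ 0 := fun h0 =>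
    (mem_filter.1 hl).2 (by rw [h0, zero_rpow_of_pos hr])
  refine sum_rpow_le_of_charging _ (m := m) (j := j)
    (p := fun k i => stoppingTime x k (i + 1) ≠ ⊤) hρ.le hρr.le (fun l hl => ?_)
    (fun l hl hfin => le_two_mul_oscillation (hmj l (hne hl)).1 (hmj l (hne hl)).2.2.2 hfin)
    (fun l hl l' hl' hll' hm => ?_)
  · rw [rpow_neg, rpow_natCast, ENNReal.inv_pow]
    exact (hmj l (hne hl)).1.trans (mul_le_mul' le_rfl (runningMax_le_totalMax _))
  · obtain ⟨-, hlow', -, hlt'⟩ := hmj l' (hne hl')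
    rw [← hm] at hlow' hlt'
    exact lt_of_stoppingTime_le_of_triggers (hmj l (hne hl)).2.2.1
      (hu.monotone (Fin.succ_le_castSucc_iff.2 hll')) (hinc l') hlow' hlt'

variable {Ω : Type*} {mΩ : MeasurableSpace Ω} (ℱ : Filtration ℕ mΩ) {P : ℕ → ℕ → Ω → ℝ}

theorem measurable_runningMax (hP : ∀ s t : ℕ, s < t → StronglyMeasurable[ℱ t] (P s t)) (t : ℕ) :
    Measurable[ℱ t] fun ω => runningMax (fun s t => P s t ω) t :=
  Finset.measurable_sup fun n' hn' => Finset.measurable_sup fun n hn =>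
    (measurable_abs.comp ((hP n n' (Finset.mem_range.1 hn)).mono
      (ℱ.mono (Finset.mem_range_succ_iff.1 hn'))).measurable).ennreal_ofReal

theorem measurableSet_stoppingTime_le (hP : ∀ s t : ℕ, s < t → StronglyMeasurable[ℱ t] (P s t))
    (m j n : ℕ) : MeasurableSet[ℱ n] {ω | stoppingTime (fun s t => P s t ω) m j ≤ n} := by
  induction j generalizing n with
  | zero => simp [stoppingTime]
  | succ j ih =>
    have hset : {ω | stoppingTime (fun s t => P s t ω) m (j + 1) ≤ n} =
        ⋃ t ∈ Set.Iic n, ⋃ t' ∈ Set.Iio t,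
          {ω | stoppingTime (fun s t => P s t ω) m j ≤ t'} ∩
            {ω | 2⁻¹ ^ (m + 1) * runningMax (fun s t => P s t ω) t ≤
              ENNReal.ofReal |P t' t ω|} := by
      ext ω
      simp [stoppingTime, nextTime_le_iff, Triggers]
    rw [hset]
    refine .biUnion (Set.to_countable _) fun t ht => .biUnion (Set.to_countable _) fun t' ht' => ?_
    have htn : t ≤ n := ht
    refine (ℱ.mono (ht'.trans_le htn).le _ (ih t')).inter (measurableSet_le ?_ ?_)
    · exact ((measurable_runningMax ℱ hP t).mono (ℱ.mono htn) le_rfl).const_mul _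
    · exact (measurable_abs.comp ((hP t' t ht').mono (ℱ.mono htn)).measurable).ennreal_ofReal

end StoppingTimeDecomposition

/-- stopping time decomposition for `r`-variation in discrete time.
For an adapted two-parameter process `P` there exist increasing sequences of
(extended-ℕ-valued) stopping times `τ^{(m)}_j` starting at `0` such that for all
`0 < ρ < r < ∞` the `r`-variation sum is bounded by
`(Π^*)^r/(1-2^{-r}) + 2^ρ Σ_m (2^{-m}Π^*)^{r-ρ} Σ_j (sup_{τ_{j} ≤ t < τ_{j+1}} |Π_{t,τ_{j+1}}|)^ρ`. -/
theorem stopping_time_variation_decomposition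
    {Ω : Type*} {mΩ : MeasurableSpace Ω} (ℱ : Filtration ℕ mΩ)
    (P : ℕ → ℕ → Ω → ℝ)
    (hadapted : ∀ s t : ℕ, s < t → StronglyMeasurable[ℱ t] (P s t)) :
    ∃ τ : ℕ → ℕ → Ω → ℕ∞,
      (∀ m ω, τ m 0 ω = 0) ∧
      (∀ m j ω, τ m j ω ≤ τ m (j + 1) ω) ∧
      (∀ m j (n : ℕ), MeasurableSet[ℱ n] {ω | τ m j ω ≤ (n : ℕ∞)}) ∧
      (∀ ρ r : ℝ, 0 < ρ → ρ < r → ∀ ω : Ω,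
        (⨆ (L : ℕ) (u : Fin (L + 1) → ℕ) (_ : StrictMono u),
            ∑ l : Fin L, (ENNReal.ofReal |P (u l.castSucc) (u l.succ) ω|) ^ r)
          ≤ (⨆ (n : ℕ) (n' : ℕ) (_ : n < n'), ENNReal.ofReal |P n n' ω|) ^ r
              / (1 - (2 : ℝ≥0∞) ^ (-r))
            + (2 : ℝ≥0∞) ^ ρ * ∑' m : ℕ,
                ((2 : ℝ≥0∞) ^ (-(m : ℝ))
                    * ⨆ (n : ℕ) (n' : ℕ) (_ : n < n'), ENNReal.ofReal |P n n' ω|) ^ (r - ρ)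
                  * ∑' j : ℕ,
                      (⨆ (t' : ℕ) (_ : (t' : ℕ∞) = τ m (j + 1) ω)
                          (t : ℕ) (_ : τ m j ω ≤ (t : ℕ∞)) (_ : t < t'),
                        ENNReal.ofReal |P t t' ω|) ^ ρ) :=
  ⟨fun m j ω => StoppingTimeDecomposition.stoppingTime (fun s t => P s t ω) m j, fun _ _ => rfl,
    fun m j _ => StoppingTimeDecomposition.stoppingTime_mono m j.le_succ,
    StoppingTimeDecomposition.measurableSet_stoppingTime_le ℱ hadapted,
    fun _ _ hρ hρr _ => iSup₂_le fun _ _ => iSup_le fun hu =>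
      StoppingTimeDecomposition.sum_rpow_increment_le hρ hρr hu⟩
end

section
/- Pathwise r-variation bound via sewing: let (F_{s,t})_{s≤t} be a two-parameter process with F_{s,s} = 0 and (g_t) a one-parameter process (discrete time), and suppose the structural identity F_{s,u} − F_{t,u} = Σ_{i=1}^{I} F^i_{s,t} · F̃^i_{t,u} holds for all s ≤ t ≤ u, with two-parameter processes F^i, F̃^i. Let ρ < 1 and suppose 1/ρ = 1/p_{i,0} + 1/p_{i,1} for each i. Then V^ρ Π(F,g) ≤ C Σ_i (V^{p_{i,1}} F^i) · (V^{p_{i,0}} Π(F̃^i,g)), pointwise on Ω, where Π(F,g)_{s,t} := Σ_{s<j≤t} F_{s,j-1}(g_j − g_{j-1}). -/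
/-!
The paraproduct `Φ = Π(F, g)` vanishes on single steps, and the structural identity gives
`Φ s u - Φ s t - Φ t u = Σ_i F^i_{s,t} Π(F̃^i, g)_{t,u}`. Bounding `|F^i_{s,t}|` and
`|Π(F̃^i, g)_{t,u}|` by the `p_{i,1}`- and `p_{i,0}`-variation sums `w_{i,1}`, `w_{i,0}` of the
two processes on `[s, u]` gives `|δΦ_{s,t,u}| ≤ ω(s, u) ^ (1 / ρ)` for
`ω = Σ_i w_{i,1} ^ (ρ / p_{i,1}) * w_{i,0} ^ (ρ / p_{i,0})`, which is superadditive by Hölder's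
inequality because the two exponents add up to `1`. As `1 / ρ > 1`, the discrete sewing lemma
(Young's point-removal argument) turns this into `|Φ s t| ^ ρ ≤ C ω(s, t)`. Summing along a
partition and using superadditivity once more, `(V^ρ Φ) ^ ρ ≤ C sup ω`, and `sup ω` is bounded
through `w_{i,k} ≤ (V^{p_{i,k}}) ^ p_{i,k}`.
-/

open ENNReal

/-- The `r`-variation of a discrete-time two-parameter process. -/
noncomputable def VvarN (r : ℝ) (P : ℕ → ℕ → ℝ) : ℝ≥0∞ :=
  ⨆ (L : ℕ) (u : Fin (L + 1) → ℕ) (_ : Monotone u),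
    (∑ l : Fin L, (ENNReal.ofReal |P (u l.castSucc) (u l.succ)|) ^ r) ^ (1 / r)

/-- Discrete-time paraproduct `Π(F,g)_{s,t} = Σ_{s<j≤t} F_{s,j-1} (g_j - g_{j-1})`. -/
noncomputable def pp (F : ℕ → ℕ → ℝ) (g : ℕ → ℝ) (s t : ℕ) : ℝ :=
  ∑ j ∈ Finset.Ioc s t, F s (j - 1) * (g j - g (j - 1))

open Finset

lemma ENNReal.rpow_mul_rpow_add_rpow_mul_rpow_le {a b : ℝ} (ha : 0 < a) (hb : 0 < b)
    (hab : a + b = 1) (x y x' y' : ℝ≥0∞) :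
    x ^ a * y ^ b + x' ^ a * y' ^ b ≤ (x + x') ^ a * (y + y') ^ b := by
  have := ENNReal.inner_le_Lp_mul_Lq univ ![x ^ a, x' ^ a] ![y ^ b, y' ^ b]
    (Real.HolderConjugate.inv_inv ha hb hab)
  simpa [Fin.sum_univ_two, ← ENNReal.rpow_mul, ha.ne', hb.ne'] using this

lemma ENNReal.sum_rpow_le_rpow_sum {ι : Type*} (s : Finset ι) (f : ι → ℝ≥0∞) {q : ℝ}
    (hq : 1 ≤ q) : ∑ i ∈ s, f i ^ q ≤ (∑ i ∈ s, f i) ^ q := by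
  classical
  induction s using Finset.induction with
  | empty => simp [zero_rpow_of_pos (zero_lt_one.trans_le hq)]
  | insert i s hi ih =>
    rw [sum_insert hi, sum_insert hi]
    exact (add_le_add_right ih _).trans (add_rpow_le_rpow_add _ _ hq)

def IntervalSuperadditive (ω : ℕ → ℕ → ℝ≥0∞) : Prop :=
  ∀ ⦃s t u : ℕ⦄, s ≤ t → t ≤ u → ω s t + ω t u ≤ ω s u

namespace IntervalSuperadditive

variable {ω : ℕ → ℕ → ℝ≥0∞}

lemma mono (hω : IntervalSuperadditive ω) {s s' t' t : ℕ} (hs : s ≤ s') (hst : s' ≤ t')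
    (ht : t' ≤ t) : ω s' t' ≤ ω s t :=
  calc ω s' t' ≤ ω s s' + ω s' t' + ω t' t := le_add_right le_add_self
    _ ≤ ω s t' + ω t' t := by gcongr; exact hω hs hst
    _ ≤ ω s t := hω (hs.trans hst) ht

lemma sum_range_le (hω : IntervalSuperadditive ω) {u : ℕ → ℕ} (hu : Monotone u) (L : ℕ) :
    ∑ l ∈ range L, ω (u l) (u (l + 1)) ≤ ω (u 0) (u L) := by
  induction L with
  | zero => simp
  | succ L ih =>
    rw [sum_range_succ]
    exact (add_le_add_left ih _).trans (hω (hu L.zero_le) (hu L.le_succ))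

lemma sum {ι : Type*} (s : Finset ι) {ω : ι → ℕ → ℕ → ℝ≥0∞}
    (hω : ∀ i ∈ s, IntervalSuperadditive (ω i)) :
    IntervalSuperadditive fun a b => ∑ i ∈ s, ω i a b := fun _ _ _ hst htu => by
  rw [← sum_add_distrib]
  exact sum_le_sum fun i hi => hω i hi hst htu

lemma rpow_mul_rpow {ω₁ ω₂ : ℕ → ℕ → ℝ≥0∞} (h₁ : IntervalSuperadditive ω₁)
    (h₂ : IntervalSuperadditive ω₂) {a b : ℝ} (ha : 0 < a) (hb : 0 < b) (hab : a + b = 1) :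
    IntervalSuperadditive fun s t => ω₁ s t ^ a * ω₂ s t ^ b := fun _ _ _ hst htu =>
  (ENNReal.rpow_mul_rpow_add_rpow_mul_rpow_le ha hb hab _ _ _ _).trans <|
    mul_le_mul' (rpow_le_rpow (h₁ hst htu) ha.le) (rpow_le_rpow (h₂ hst htu) hb.le)

lemma exists_le_two_div_mul (hω : IntervalSuperadditive ω) {u : ℕ → ℕ} (hu : Monotone u) (L : ℕ) :
    ∃ j ≤ L, ω (u j) (u (j + 2)) ≤ 2 / (L + 1 : ℝ≥0∞) * ω (u 0) (u (L + 2)) := by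
  set J := L / 2 + 1
  have hJ : (1 : ℝ≥0∞) ≤ J * (2 / (L + 1 : ℝ≥0∞)) := by
    rw [← mul_div_assoc, ENNReal.le_div_iff_mul_le (by simp) (by simp), one_mul]
    exact_mod_cast (by omega : L + 1 ≤ J * 2)
  -- the intervals `[u (2 * k), u (2 * k + 2)]`, `k < J`, do not overlap
  have hsum : ∑ k ∈ range J, ω (u (2 * k)) (u (2 * k + 2)) ≤
      ∑ _k ∈ range J, 2 / (L + 1 : ℝ≥0∞) * ω (u 0) (u (L + 2)) := by
    have hchain := hω.sum_range_le (u := fun k => u (2 * k)) (fun a b hab => hu (by omega)) J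
    calc _ ≤ ω (u 0) (u (2 * J)) := hchain
      _ ≤ ω (u 0) (u (L + 2)) := hω.mono le_rfl (hu (Nat.zero_le _)) (hu (by omega))
      _ ≤ _ := by
          rw [sum_const, card_range, nsmul_eq_mul, ← mul_assoc]
          exact le_mul_of_one_le_left zero_le hJ
  obtain ⟨k, hk, hle⟩ := ENNReal.exists_le_of_sum_le (nonempty_range_iff.2 (by omega)) hsum
  exact ⟨2 * k, by rw [mem_range] at hk; omega, hle⟩

end IntervalSuperadditive

noncomputable def varSum (r : ℝ) (P : ℕ → ℕ → ℝ) (L : ℕ) (u : ℕ → ℕ) : ℝ≥0∞ :=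
  ∑ l ∈ range L, ENNReal.ofReal |P (u l) (u (l + 1))| ^ r

lemma varSum_add (r : ℝ) (P : ℕ → ℕ → ℝ) (L L' : ℕ) (u : ℕ → ℕ) :
    varSum r P (L + L') u = varSum r P L u + varSum r P L' fun n => u (L + n) := by
  simp only [varSum, sum_range_add, add_assoc]

def partitions (s t : ℕ) : Set (ℕ × (ℕ → ℕ)) :=
  {c | Monotone c.2 ∧ c.2 0 = s ∧ c.2 c.1 = t}

noncomputable def intervalVar (r : ℝ) (P : ℕ → ℕ → ℝ) (s t : ℕ) : ℝ≥0∞ :=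
  ⨆ c ∈ partitions s t, varSum r P c.1 c.2

lemma two_point_mem_partitions {s t : ℕ} (hst : s ≤ t) :
    (1, fun n => if n = 0 then s else t) ∈ partitions s t :=
  ⟨fun a b hab => by dsimp only; split_ifs <;> omega, rfl, rfl⟩

lemma varSum_le_intervalVar {r : ℝ} {P : ℕ → ℕ → ℝ} {s t L : ℕ} {u : ℕ → ℕ}
    (hu : (L, u) ∈ partitions s t) : varSum r P L u ≤ intervalVar r P s t :=
  le_iSup₂ (f := fun c (_ : c ∈ partitions s t) => varSum r P c.1 c.2) (L, u) hu

lemma concat_mem_partitions {s t u L L' : ℕ} {v w : ℕ → ℕ} (hv : (L, v) ∈ partitions s t)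
    (hw : (L', w) ∈ partitions t u) :
    (L + L', fun n => if n ≤ L then v n else w (n - L)) ∈ partitions s u := by
  obtain ⟨hv, hv0, hvL⟩ : Monotone v ∧ v 0 = s ∧ v L = t := hv
  obtain ⟨hw, hw0, hwL'⟩ : Monotone w ∧ w 0 = t ∧ w L' = u := hw
  refine ⟨fun a b hab => ?_, by simp [hv0], ?_⟩
  · dsimp only
    split_ifs with ha hb hb
    · exact hv hab
    · exact (hv ha).trans (hvL.trans_le (hw0 ▸ hw (Nat.zero_le _)))
    · omega
    · exact hw (by omega)
  · rcases L'.eq_zero_or_pos with rfl | hL'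
    · simp [hvL, ← hw0, hwL']
    · simp [hL'.ne', hwL']

lemma intervalSuperadditive_intervalVar (r : ℝ) (P : ℕ → ℕ → ℝ) :
    IntervalSuperadditive (intervalVar r P) := by
  intro s t u hst htu
  refine ENNReal.biSup_add_biSup_le ⟨_, two_point_mem_partitions hst⟩
    ⟨_, two_point_mem_partitions htu⟩ fun ⟨L, v⟩ hv ⟨L', w⟩ hw => ?_
  refine le_of_eq_of_le ?_ (varSum_le_intervalVar (concat_mem_partitions hv hw))
  rw [varSum_add]
  congr 1
  · refine sum_congr rfl fun l hl => ?_
    rw [mem_range] at hl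
    simp [hl.le, Nat.succ_le_of_lt hl]
  · congr 1
    ext n
    rcases n.eq_zero_or_pos with rfl | hn
    · simp [(show v L = t from hv.2.2), (show w 0 = t from hw.2.1)]
    · simp [hn.ne']

lemma ofReal_abs_rpow_le_intervalVar (r : ℝ) (P : ℕ → ℕ → ℝ) {s t : ℕ} (hst : s ≤ t) :
    ENNReal.ofReal |P s t| ^ r ≤ intervalVar r P s t := by
  simpa [varSum] using varSum_le_intervalVar (r := r) (P := P) (two_point_mem_partitions hst)

lemma ofReal_abs_le_intervalVar_rpow {p : ℝ} (hp : 0 < p) (P : ℕ → ℕ → ℝ) {s' s t t' : ℕ}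
    (hs : s' ≤ s) (hst : s ≤ t) (ht : t ≤ t') :
    ENNReal.ofReal |P s t| ≤ intervalVar p P s' t' ^ (1 / p) :=
  calc ENNReal.ofReal |P s t| = (ENNReal.ofReal |P s t| ^ p) ^ (1 / p) := by
        rw [← rpow_mul, mul_one_div_cancel hp.ne', rpow_one]
    _ ≤ intervalVar p P s' t' ^ (1 / p) := by
        gcongr
        exact (ofReal_abs_rpow_le_intervalVar p P hst).trans
          ((intervalSuperadditive_intervalVar p P).mono hs hst ht)

lemma varSum_le_VvarN_rpow {r : ℝ} (hr : 0 < r) (P : ℕ → ℕ → ℝ) {L : ℕ} {u : ℕ → ℕ}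
    (hu : Monotone u) : varSum r P L u ≤ VvarN r P ^ r := by
  have h : varSum r P L u ^ (1 / r) ≤ VvarN r P := by
    refine le_iSup_of_le L <| le_iSup_of_le (fun m : Fin (L + 1) => u m) <|
      le_iSup_of_le (fun a b hab => hu hab) (le_of_eq ?_)
    simp only [varSum, Fin.val_castSucc, Fin.val_succ]
    rw [Fin.sum_univ_eq_sum_range (fun l => ENNReal.ofReal |P (u l) (u (l + 1))| ^ r)]
  calc varSum r P L u = (varSum r P L u ^ (1 / r)) ^ r := by
        rw [← rpow_mul, one_div_mul_cancel hr.ne', rpow_one]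
    _ ≤ VvarN r P ^ r := by gcongr

lemma VvarN_le_of_forall_varSum_le {r : ℝ} (hr : 0 < r) {P : ℕ → ℕ → ℝ} {M : ℝ≥0∞}
    (h : ∀ L u, Monotone u → varSum r P L u ≤ M) : VvarN r P ≤ M ^ (1 / r) := by
  refine iSup_le fun L => iSup₂_le fun u hu => ?_
  let w : ℕ → ℕ := fun n => u ⟨min n L, by omega⟩
  have hw : Monotone w := fun a b hab => hu (by simp [Fin.le_def]; omega)
  refine le_of_eq_of_le ?_ (rpow_le_rpow (h L w hw) (by positivity))
  rw [varSum, ← Fin.sum_univ_eq_sum_range (fun l => ENNReal.ofReal |P (w l) (w (l + 1))| ^ r)]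
  congr 2 with l
  have h₀ : min (l : ℕ) L = l := min_eq_left l.isLt.le
  have h₁ : min ((l : ℕ) + 1) L = l + 1 := min_eq_left l.isLt
  simp only [w, h₀, h₁]
  rfl

lemma intervalVar_le_VvarN_rpow {r : ℝ} (hr : 0 < r) (P : ℕ → ℕ → ℝ) (s t : ℕ) :
    intervalVar r P s t ≤ VvarN r P ^ r :=
  iSup₂_le fun _ hc => varSum_le_VvarN_rpow hr P hc.1

lemma VvarN_le_of_control {r : ℝ} (hr : 0 < r) {P : ℕ → ℕ → ℝ} {ω : ℕ → ℕ → ℝ≥0∞}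
    (hω : IntervalSuperadditive ω) {c M : ℝ≥0∞}
    (hP : ∀ s t, s ≤ t → ENNReal.ofReal |P s t| ^ r ≤ c * ω s t)
    (hM : ∀ s t, s ≤ t → ω s t ≤ M) : VvarN r P ≤ (c * M) ^ (1 / r) :=
  VvarN_le_of_forall_varSum_le hr fun L u hu =>
    calc varSum r P L u ≤ ∑ l ∈ range L, c * ω (u l) (u (l + 1)) :=
          sum_le_sum fun l _ => hP _ _ (hu l.le_succ)
      _ = c * ∑ l ∈ range L, ω (u l) (u (l + 1)) := (mul_sum _ _ _).symm
      _ ≤ c * M := by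
          gcongr
          exact (hω.sum_range_le hu L).trans (hM _ _ (hu L.zero_le))

def dropIndex (k : ℕ) (u : ℕ → ℕ) (n : ℕ) : ℕ :=
  if n < k then u n else u (n + 1)

lemma dropIndex_of_lt {k n : ℕ} (u : ℕ → ℕ) (h : n < k) : dropIndex k u n = u n := if_pos h

lemma dropIndex_of_le {k n : ℕ} (u : ℕ → ℕ) (h : k ≤ n) : dropIndex k u n = u (n + 1) :=
  if_neg h.not_gt

lemma Monotone.dropIndex {u : ℕ → ℕ} (hu : Monotone u) (k : ℕ) : Monotone (dropIndex k u) :=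
  fun a b hab => by unfold _root_.dropIndex; split_ifs <;> exact hu (by omega)

lemma sum_range_eq_sum_range_dropIndex_add (Φ : ℕ → ℕ → ℝ) (u : ℕ → ℕ) {j L : ℕ}
    (hj : j ≤ L) :
    ∑ l ∈ range (L + 2), Φ (u l) (u (l + 1)) =
      ∑ l ∈ range (L + 1), Φ (dropIndex (j + 1) u l) (dropIndex (j + 1) u (l + 1)) +
        (Φ (u j) (u (j + 1)) + Φ (u (j + 1)) (u (j + 2)) - Φ (u j) (u (j + 2))) := by
  induction L, hj using Nat.le_induction with
  | base =>
    have hbelow : ∀ l ∈ range j,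
        Φ (dropIndex (j + 1) u l) (dropIndex (j + 1) u (l + 1)) = Φ (u l) (u (l + 1)) := by
      intro l hl
      rw [mem_range] at hl
      rw [dropIndex_of_lt u (by omega), dropIndex_of_lt u (by omega)]
    simp only [sum_range_succ, sum_congr rfl hbelow, dropIndex_of_lt u j.lt_succ_self,
      dropIndex_of_le u le_rfl]
    ring
  | succ L hjL ih =>
    rw [sum_range_succ, ih, sum_range_succ _ (L + 1),
      dropIndex_of_le u (by omega : j + 1 ≤ L + 1), dropIndex_of_le u (by omega : j + 1 ≤ L + 2)]
    ring

/-- `2 ^ q ζ(q)`: Young's argument pays `(2 / (m + 1)) ^ q * ω ^ q` to remove a point from a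
partition into `m + 2` intervals. -/
noncomputable def sewingConst (q : ℝ) : ℝ≥0∞ :=
  ∑' m : ℕ, (2 / ((m : ℝ≥0∞) + 1)) ^ q

lemma sewingConst_lt_top {q : ℝ} (hq : 1 < q) : sewingConst q < ∞ := by
  have hterm (m : ℕ) :
      (2 / ((m : ℝ≥0∞) + 1)) ^ q = ENNReal.ofReal ((2 / ((m : ℝ) + 1)) ^ q) := by
    rw [← ENNReal.ofReal_rpow_of_nonneg (by positivity) (by linarith),
      ENNReal.ofReal_div_of_pos (by positivity)]
    norm_cast
  have hsum : Summable fun m : ℕ => (2 / ((m : ℝ) + 1)) ^ q := by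
    refine (((Real.summable_one_div_nat_rpow.2 hq).comp_injective (add_left_injective 1)).mul_left
      (2 ^ q)).congr fun m => ?_
    rw [Real.div_rpow (by norm_num) (by positivity)]
    simp [div_eq_mul_inv]
  rw [sewingConst, tsum_congr hterm,
    ← ENNReal.ofReal_tsum_of_nonneg (fun m => by positivity) hsum]
  exact ofReal_lt_top

section Sewing

variable {Φ : ℕ → ℕ → ℝ} {ω : ℕ → ℕ → ℝ≥0∞} {q : ℝ}

/-- Young's argument: removing a point `u (j + 1)` whose neighbours span a short interval
costs one term of the form `|δΦ|`, and repeating this empties the partition. -/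
lemma ofReal_abs_sub_sum_range_le (hω : IntervalSuperadditive ω) (hq : 0 ≤ q)
    (hδ : ∀ s t u, s ≤ t → t ≤ u → ENNReal.ofReal |Φ s u - Φ s t - Φ t u| ≤ ω s u ^ q)
    (L : ℕ) {u : ℕ → ℕ} (hu : Monotone u) :
    ENNReal.ofReal |Φ (u 0) (u (L + 1)) - ∑ l ∈ range (L + 1), Φ (u l) (u (l + 1))| ≤
      (∑ m ∈ range L, (2 / ((m : ℝ≥0∞) + 1)) ^ q) * ω (u 0) (u (L + 1)) ^ q := by
  induction L generalizing u with
  | zero => simp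
  | succ L ih =>
    obtain ⟨j, hjL, hj⟩ := hω.exists_le_two_div_mul hu L
    have hdrop := ih (hu.dropIndex (j + 1))
    rw [dropIndex_of_lt u j.succ_pos, dropIndex_of_le u (by omega : j + 1 ≤ L + 1)] at hdrop
    have hjump : ENNReal.ofReal |Φ (u j) (u (j + 1)) + Φ (u (j + 1)) (u (j + 2)) -
        Φ (u j) (u (j + 2))| ≤ (2 / ((L : ℝ≥0∞) + 1)) ^ q * ω (u 0) (u (L + 2)) ^ q := by
      rw [← abs_neg, neg_sub, sub_add_eq_sub_sub, ← mul_rpow_of_nonneg _ _ hq]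
      exact (hδ _ _ _ (hu j.le_succ) (hu (j + 1).le_succ)).trans (rpow_le_rpow hj hq)
    simp only [← Real.enorm_eq_ofReal_abs] at hdrop hjump ⊢
    rw [sum_range_eq_sum_range_dropIndex_add Φ u hjL, ← sub_sub,
      sum_range_succ (fun m => (2 / ((m : ℝ≥0∞) + 1)) ^ q), add_mul]
    exact enorm_sub_le.trans (add_le_add hdrop hjump)

theorem ofReal_abs_le_sewingConst_mul (hω : IntervalSuperadditive ω) (hq : 0 ≤ q)
    (hδ : ∀ s t u, s ≤ t → t ≤ u → ENNReal.ofReal |Φ s u - Φ s t - Φ t u| ≤ ω s u ^ q)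
    (hΦ₀ : ∀ n, Φ n n = 0) (hΦ₁ : ∀ n, Φ n (n + 1) = 0) {s t : ℕ} (hst : s ≤ t) :
    ENNReal.ofReal |Φ s t| ≤ sewingConst q * ω s t ^ q := by
  obtain rfl | hst := hst.eq_or_lt
  · simp [hΦ₀]
  obtain ⟨L, rfl⟩ : ∃ L, t = s + (L + 1) := ⟨t - s - 1, by omega⟩
  have h := ofReal_abs_sub_sum_range_le hω hq hδ L (u := (s + ·))
    fun _ _ => (Nat.add_le_add_left · s)
  simp only [add_zero, ← add_assoc, hΦ₁, sum_const_zero, sub_zero] at h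
  rw [← add_assoc]
  exact h.trans (by gcongr; exact ENNReal.sum_le_tsum _)

end Sewing

lemma pp_self (F : ℕ → ℕ → ℝ) (g : ℕ → ℝ) (n : ℕ) : pp F g n n = 0 := by
  simp [pp]

lemma pp_succ {F : ℕ → ℕ → ℝ} (hF : ∀ s, F s s = 0) (g : ℕ → ℝ) (n : ℕ) :
    pp F g n (n + 1) = 0 := by
  simp [pp, hF]

lemma pp_sub_pp_sub_pp {ι : Type*} [Fintype ι] {F : ℕ → ℕ → ℝ} {Fi Fti : ι → ℕ → ℕ → ℝ}
    (hF : ∀ s t u : ℕ, s ≤ t → t ≤ u → F s u - F t u = ∑ i, Fi i s t * Fti i t u)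
    (g : ℕ → ℝ) {s t u : ℕ} (hst : s ≤ t) (htu : t ≤ u) :
    pp F g s u - pp F g s t - pp F g t u = ∑ i, Fi i s t * pp (Fti i) g t u := by
  simp only [pp, mul_sum]
  rw [← sum_Ioc_consecutive _ hst htu, add_sub_cancel_left, ← sum_sub_distrib, sum_comm]
  refine sum_congr rfl fun j hj => ?_
  rw [mem_Ioc] at hj
  rw [← sub_mul, hF s t (j - 1) hst (by omega), sum_mul]
  exact sum_congr rfl fun i _ => by ring

lemma ofReal_abs_mul_le_intervalVar {ρ p p' : ℝ} (hρ : 0 < ρ) (hp : 0 < p) (hp' : 0 < p')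
    (A B : ℕ → ℕ → ℝ) {s t u : ℕ} (hst : s ≤ t) (htu : t ≤ u) :
    ENNReal.ofReal |A s t * B t u| ≤
      (intervalVar p A s u ^ (ρ / p) * intervalVar p' B s u ^ (ρ / p')) ^ (1 / ρ) := by
  have hexp : ∀ r, ρ / r * (1 / ρ) = 1 / r := fun r => by field_simp
  rw [mul_rpow_of_nonneg _ _ (by positivity), ← rpow_mul, ← rpow_mul, hexp, hexp, abs_mul,
    ENNReal.ofReal_mul (abs_nonneg _)]
  exact mul_le_mul' (ofReal_abs_le_intervalVar_rpow hp A le_rfl hst htu)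
    (ofReal_abs_le_intervalVar_rpow hp' B hst htu le_rfl)

lemma intervalVar_rpow_mul_le {ρ p p' : ℝ} (hρ : 0 ≤ ρ) (hp : 0 < p) (hp' : 0 < p')
    (A B : ℕ → ℕ → ℝ) (s t : ℕ) :
    intervalVar p A s t ^ (ρ / p) * intervalVar p' B s t ^ (ρ / p') ≤
      (VvarN p A * VvarN p' B) ^ ρ := by
  have key : ∀ {r}, 0 < r → ∀ P, intervalVar r P s t ^ (ρ / r) ≤ VvarN r P ^ ρ := fun hr P =>
    calc intervalVar _ P s t ^ (ρ / _) ≤ (VvarN _ P ^ _) ^ (ρ / _) :=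
          rpow_le_rpow (intervalVar_le_VvarN_rpow hr P s t) (div_nonneg hρ hr.le)
      _ = VvarN _ P ^ ρ := by rw [← rpow_mul, mul_div_cancel₀ _ hr.ne']
  rw [mul_rpow_of_nonneg _ _ hρ]
  exact mul_le_mul' (key hp A) (key hp' B)

section SewingControl

variable {ι : Type*} [Fintype ι] {ρ : ℝ} {p q : ι → ℝ}

noncomputable def sewingControl (ρ : ℝ) (p q : ι → ℝ) (A B : ι → ℕ → ℕ → ℝ) (s t : ℕ) :
    ℝ≥0∞ :=
  ∑ i, intervalVar (p i) (A i) s t ^ (ρ / p i) * intervalVar (q i) (B i) s t ^ (ρ / q i)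

lemma intervalSuperadditive_sewingControl (hρ : 0 < ρ) (hp : ∀ i, 0 < p i) (hq : ∀ i, 0 < q i)
    (hpq : ∀ i, ρ / p i + ρ / q i = 1) (A B : ι → ℕ → ℕ → ℝ) :
    IntervalSuperadditive (sewingControl ρ p q A B) :=
  IntervalSuperadditive.sum _ fun i _ =>
    (intervalSuperadditive_intervalVar _ _).rpow_mul_rpow (intervalSuperadditive_intervalVar _ _)
      (div_pos hρ (hp i)) (div_pos hρ (hq i)) (hpq i)

lemma ofReal_abs_sum_mul_le_sewingControl (hρ : 0 < ρ) (hρ1 : ρ ≤ 1) (hp : ∀ i, 0 < p i)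
    (hq : ∀ i, 0 < q i) (A B : ι → ℕ → ℕ → ℝ) {s t u : ℕ} (hst : s ≤ t) (htu : t ≤ u) :
    ENNReal.ofReal |∑ i, A i s t * B i t u| ≤ sewingControl ρ p q A B s u ^ (1 / ρ) := by
  rw [← Real.enorm_eq_ofReal_abs]
  refine (enorm_sum_le _ _).trans <| le_trans ?_ <|
    ENNReal.sum_rpow_le_rpow_sum _ _ ((one_le_div hρ).2 hρ1)
  exact sum_le_sum fun i _ => (Real.enorm_eq_ofReal_abs _).trans_le <|
    ofReal_abs_mul_le_intervalVar hρ (hp i) (hq i) _ _ hst htu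

lemma sewingControl_le (hρ : 0 ≤ ρ) (hp : ∀ i, 0 < p i) (hq : ∀ i, 0 < q i)
    (A B : ι → ℕ → ℕ → ℝ) (s t : ℕ) :
    sewingControl ρ p q A B s t ≤
      Fintype.card ι * (∑ i, VvarN (p i) (A i) * VvarN (q i) (B i)) ^ ρ :=
  calc sewingControl ρ p q A B s t
      ≤ ∑ _i : ι, (∑ i, VvarN (p i) (A i) * VvarN (q i) (B i)) ^ ρ :=
        sum_le_sum fun i _ => (intervalVar_rpow_mul_le hρ (hp i) (hq i) _ _ s t).trans <|
          rpow_le_rpow (single_le_sum (f := fun i => VvarN (p i) (A i) * VvarN (q i) (B i))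
            (fun _ _ => zero_le) (mem_univ i)) hρ
    _ = _ := by rw [sum_const, card_univ, nsmul_eq_mul]

end SewingControl

/-- pathwise `ρ`-variation bound via the sewing lemma, `ρ < 1`:
under the structural identity `F_{s,u} - F_{t,u} = Σ_i F^i_{s,t} F̃^i_{t,u}` and
`1/ρ = 1/p_{i,0} + 1/p_{i,1}`, one has
`V^ρ Π(F,g) ≤ C Σ_i V^{p_{i,1}} F^i · V^{p_{i,0}} Π(F̃^i, g)` pointwise. -/
theorem sewing_variation_bound (I : ℕ) (ρ : ℝ) (p₀ p₁ : Fin I → ℝ)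
    (hρ : 0 < ρ) (hρ1 : ρ < 1)
    (hp : ∀ i, 0 < p₀ i ∧ 0 < p₁ i ∧ 1 / ρ = 1 / p₀ i + 1 / p₁ i) :
    ∃ C : ℝ≥0∞, C < ∞ ∧
      ∀ (F : ℕ → ℕ → ℝ) (g : ℕ → ℝ) (Fi Fti : Fin I → ℕ → ℕ → ℝ),
        (∀ s, F s s = 0) →
        (∀ s t u : ℕ, s ≤ t → t ≤ u →
          F s u - F t u = ∑ i : Fin I, Fi i s t * Fti i t u) →
        VvarN ρ (pp F g)
          ≤ C * ∑ i : Fin I, VvarN (p₁ i) (Fi i) * VvarN (p₀ i) (pp (Fti i) g) := by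
  have hq : 1 < 1 / ρ := by rw [lt_div_iff₀ hρ]; linarith
  have hexp : ∀ i, ρ / p₁ i + ρ / p₀ i = 1 := fun i => by
    rw [← mul_one_div_cancel hρ.ne', (hp i).2.2]; ring
  refine ⟨sewingConst (1 / ρ) * (I : ℝ≥0∞) ^ (1 / ρ), mul_lt_top (sewingConst_lt_top hq)
    (rpow_lt_top_of_nonneg (by positivity) (natCast_ne_top I)), ?_⟩
  intro F g Fi Fti hF hstruct
  have hp₀ i := (hp i).1
  have hp₁ i := (hp i).2.1
  set ω := sewingControl ρ p₁ p₀ Fi fun i => pp (Fti i) g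
  have hω : IntervalSuperadditive ω := intervalSuperadditive_sewingControl hρ hp₁ hp₀ hexp _ _
  have hsewing : ∀ s t, s ≤ t →
      ENNReal.ofReal |pp F g s t| ^ ρ ≤ sewingConst (1 / ρ) ^ ρ * ω s t := fun s t hst =>
    calc ENNReal.ofReal |pp F g s t| ^ ρ ≤ (sewingConst (1 / ρ) * ω s t ^ (1 / ρ)) ^ ρ := by
          refine rpow_le_rpow (ofReal_abs_le_sewingConst_mul hω (by positivity)
            (fun s t u h h' => ?_) (pp_self F g) (pp_succ hF g) hst) hρ.le
          rw [pp_sub_pp_sub_pp hstruct g h h']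
          exact ofReal_abs_sum_mul_le_sewingControl hρ hρ1.le hp₁ hp₀ _ _ h h'
      _ = _ := by rw [mul_rpow_of_nonneg _ _ hρ.le, ← rpow_mul, one_div_mul_cancel hρ.ne', rpow_one]
  refine (VvarN_le_of_control hρ hω hsewing fun s t _ =>
    sewingControl_le hρ.le hp₁ hp₀ _ _ s t).trans_eq ?_
  rw [Fintype.card_fin, mul_rpow_of_nonneg _ _ (by positivity),
    mul_rpow_of_nonneg _ _ (by positivity), ← rpow_mul, ← rpow_mul, mul_one_div_cancel hρ.ne',
    rpow_one, rpow_one, mul_assoc]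
end

section
/- Consistency of partition refinement for discretized paraproducts: for adapted partitions π ⊆ π', a two-parameter process F and a one-parameter process g, and all 0 ≤ t ≤ t', one has Π^π(F,g)_{t,t'} = Π^{π'}(F^{(π)}, g)_{t,t'}, where F^{(π)}_{s,t} := F_{⌊s,π⌋, ⌊t,π⌋} with ⌊t,π⌋ := max{ s ∈ π : s ≤ t }, and Π^π(F,g)_{t,t'} := Σ_{⌊t,π⌋ ≤ π_j < t'} F_{⌊t,π⌋,π_j} (g_{π_{j+1} ∧ t'} − g_{π_j ∨ t}). -/
open Filter Set

/-- Index of the last partition point `≤ t`. -/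
noncomputable def lastIdx (π : ℕ → ℝ) (t : ℝ) : ℕ := sSup {n : ℕ | π n ≤ t}

/-- `⌊t,π⌋`, the last partition point of `π` which is `≤ t`. -/
noncomputable def flr (π : ℕ → ℝ) (t : ℝ) : ℝ := π (lastIdx π t)

/-- The discretized Itô sum
`Π^π(F,g)_{t,t'} = Σ_{⌊t,π⌋ ≤ π_j < t'} F_{⌊t,π⌋,π_j} (g_{π_{j+1} ∧ t'} - g_{π_j ∨ t})`. -/
noncomputable def ppP (π : ℕ → ℝ) (F : ℝ → ℝ → ℝ) (g : ℝ → ℝ) (t t' : ℝ) : ℝ :=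
  ∑' j : {j : ℕ // flr π t ≤ π j ∧ π j < t'},
    F (flr π t) (π (j : ℕ)) * (g (min (π ((j : ℕ) + 1)) t') - g (max (π (j : ℕ)) t))

noncomputable def fidx (π : ℕ → ℝ) (x : ℝ) : ℕ := sInf {n : ℕ | x ≤ π n}

section helpers

variable {π : ℕ → ℝ}

lemma fidx_nonempty (hπtop : Tendsto π atTop atTop) (x : ℝ) :
    {n : ℕ | x ≤ π n}.Nonempty := by
  obtain ⟨B, hB⟩ := (hπtop.eventually (eventually_ge_atTop x)).exists
  exact ⟨B, hB⟩

lemma fidx_le_iff (hm : Monotone π) (hπtop : Tendsto π atTop atTop) {x : ℝ} {k : ℕ} :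
    fidx π x ≤ k ↔ x ≤ π k := by
  constructor
  · intro h
    exact le_trans (Nat.sInf_mem (fidx_nonempty hπtop x)) (hm h)
  · exact fun h => Nat.sInf_le h

lemma lt_fidx_iff (hm : Monotone π) (hπtop : Tendsto π atTop atTop) {x : ℝ} {k : ℕ} :
    k < fidx π x ↔ π k < x := by
  rw [← not_le, ← not_le, fidx_le_iff hm hπtop]

lemma fidx_of_mem_range (hm : Monotone π) (hπtop : Tendsto π atTop atTop)
    {x : ℝ} (hx : x ∈ Set.range π) : π (fidx π x) = x := by
  obtain ⟨m, hm'⟩ := hx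
  refine le_antisymm ?_ (Nat.sInf_mem (s := {n : ℕ | x ≤ π n}) ⟨m, hm'.ge⟩)
  calc π (fidx π x) ≤ π m := hm (Nat.sInf_le hm'.ge)
    _ = x := hm'

lemma le_lastIdx_iff (hπ : StrictMono π) (hπ0 : π 0 = 0)
    (hπtop : Tendsto π atTop atTop) {t : ℝ} (ht : 0 ≤ t) {n : ℕ} :
    n ≤ lastIdx π t ↔ π n ≤ t := by
  have hne : {n : ℕ | π n ≤ t}.Nonempty := ⟨0, by simpa [hπ0] using ht⟩
  have hbdd : BddAbove {n : ℕ | π n ≤ t} := by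
    obtain ⟨B, hB⟩ := (hπtop.eventually (eventually_gt_atTop t)).exists_forall_of_atTop
    refine ⟨B, fun n hn => ?_⟩
    by_contra hc
    exact absurd ((hB n (le_of_not_ge hc)).trans_le hn) (lt_irrefl t)
  constructor
  · intro h
    exact le_trans (hπ.monotone h) (Nat.sSup_mem hne hbdd)
  · intro h
    exact le_csSup hbdd h

lemma lastIdx_eq_iff (hπ : StrictMono π) (hπ0 : π 0 = 0)
    (hπtop : Tendsto π atTop atTop) {x : ℝ} (hx : 0 ≤ x) {j : ℕ} :
    lastIdx π x = j ↔ π j ≤ x ∧ x < π (j + 1) := by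
  have H := fun (n : ℕ) => @le_lastIdx_iff π hπ hπ0 hπtop x hx n
  constructor
  · rintro rfl
    refine ⟨(H _).mp le_rfl, ?_⟩
    by_contra hc
    exact absurd ((H _).mpr (le_of_not_gt hc)) (by omega)
  · rintro ⟨h1, h2⟩
    have hj : j ≤ lastIdx π x := (H j).mpr h1
    have hj2 : ¬ (j + 1 ≤ lastIdx π x) := fun hc => absurd ((H _).mp hc) (not_le.mpr h2)
    omega

lemma flr_le (hπ : StrictMono π) (hπ0 : π 0 = 0) (hπtop : Tendsto π atTop atTop)
    {t : ℝ} (ht : 0 ≤ t) : flr π t ≤ t :=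
  (le_lastIdx_iff hπ hπ0 hπtop ht).mp le_rfl

lemma flr_le_flr {π' : ℕ → ℝ} (hπ : StrictMono π) (hπ0 : π 0 = 0)
    (hπtop : Tendsto π atTop atTop) (hπ' : StrictMono π') (hπ'0 : π' 0 = 0)
    (hπ'top : Tendsto π' atTop atTop) (hsub : Set.range π ⊆ Set.range π')
    {t : ℝ} (ht : 0 ≤ t) : flr π t ≤ flr π' t := by
  obtain ⟨m, hm⟩ := hsub ⟨lastIdx π t, rfl⟩
  have h1 : π' m ≤ t := by rw [hm]; exact flr_le hπ hπ0 hπtop ht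
  have h2 : m ≤ lastIdx π' t := (le_lastIdx_iff hπ' hπ'0 hπ'top ht).mpr h1
  calc flr π t = π' m := hm.symm
    _ ≤ π' (lastIdx π' t) := hπ'.monotone h2

lemma flr_flr {π' : ℕ → ℝ} (hπ : StrictMono π) (hπ0 : π 0 = 0)
    (hπtop : Tendsto π atTop atTop) (hπ' : StrictMono π') (hπ'0 : π' 0 = 0)
    (hπ'top : Tendsto π' atTop atTop) (hsub : Set.range π ⊆ Set.range π')
    {t : ℝ} (ht : 0 ≤ t) : flr π (flr π' t) = flr π t := by
  have ha'0 : 0 ≤ flr π' t := by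
    rw [flr, ← hπ'0]; exact hπ'.monotone (Nat.zero_le _)
  have ha't : flr π' t ≤ t := flr_le hπ' hπ'0 hπ'top ht
  refine le_antisymm ?_ ?_
  · exact hπ.monotone ((le_lastIdx_iff hπ hπ0 hπtop ht).mpr
      ((flr_le hπ hπ0 hπtop ha'0).trans ha't))
  · exact hπ.monotone ((le_lastIdx_iff hπ hπ0 hπtop ha'0).mpr
      (flr_le_flr hπ hπ0 hπtop hπ' hπ'0 hπ'top hsub ht))

lemma sum_Ico_telescope (G : ℕ → ℝ) {a b : ℕ} (h : a ≤ b) :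
    ∑ k ∈ Finset.Ico a b, (G (k + 1) - G k) = G b - G a := by
  rw [Finset.sum_Ico_eq_sub _ h, Finset.sum_range_sub, Finset.sum_range_sub]
  ring

end helpers

/-- consistency of partition refinement for discretized paraproducts:
if `π ⊆ π'` then `Π^π(F,g)_{t,t'} = Π^{π'}(F^{(π)}, g)_{t,t'}` where
`F^{(π)}_{s,u} = F_{⌊s,π⌋,⌊u,π⌋}`. The identity is pathwise/algebraic. -/
theorem refinement_consistency (π π' : ℕ → ℝ) (F : ℝ → ℝ → ℝ) (g : ℝ → ℝ)
    (hπ : StrictMono π) (hπ0 : π 0 = 0) (hπtop : Tendsto π atTop atTop)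
    (hπ' : StrictMono π') (hπ'0 : π' 0 = 0) (hπ2top : Tendsto π' atTop atTop)
    (hsub : Set.range π ⊆ Set.range π')
    (t t' : ℝ) (ht : 0 ≤ t) (htt' : t ≤ t') :
    ppP π F g t t' = ppP π' (fun s u => F (flr π s) (flr π u)) g t t' := by
  classical
  have hmono := hπ.monotone
  have hmono' := hπ'.monotone
  have ht' : 0 ≤ t' := ht.trans htt'
  set N := lastIdx π t with hN
  set N' := lastIdx π' t with hN'
  set M := fidx π t' with hM
  set M' := fidx π' t' with hM'
  have hat : π N ≤ t := (le_lastIdx_iff hπ hπ0 hπtop ht).mp le_rfl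
  have ha't : π' N' ≤ t := (le_lastIdx_iff hπ' hπ'0 hπ2top ht).mp le_rfl
  have ha'0 : (0:ℝ) ≤ π' N' := by rw [← hπ'0]; exact hmono' (Nat.zero_le _)
  have haa' : π N ≤ π' N' := flr_le_flr hπ hπ0 hπtop hπ' hπ'0 hπ2top hsub ht
  have htN1 : t < π (N + 1) := by
    by_contra hc
    have h := (le_lastIdx_iff hπ hπ0 hπtop ht).mpr (le_of_not_gt hc)
    rw [← hN] at h
    omega
  have hflrflr : flr π (flr π' t) = π N :=
    flr_flr hπ hπ0 hπtop hπ' hπ'0 hπ2top hsub ht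
  -- convert the two tsums to finite sums
  have hpredL : ∀ j : ℕ, (flr π t ≤ π j ∧ π j < t') ↔ j ∈ Finset.Ico N M := by
    intro j
    rw [Finset.mem_Ico]
    constructor
    · rintro ⟨h1, h2⟩
      have h1' : π N ≤ π j := h1
      exact ⟨hπ.le_iff_le.mp h1', (lt_fidx_iff hmono hπtop).mpr h2⟩
    · rintro ⟨h1, h2⟩
      exact ⟨hmono h1, (lt_fidx_iff hmono hπtop).mp h2⟩
  have hpredR : ∀ k : ℕ, (flr π' t ≤ π' k ∧ π' k < t') ↔ k ∈ Finset.Ico N' M' := by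
    intro k
    rw [Finset.mem_Ico]
    constructor
    · rintro ⟨h1, h2⟩
      have h1' : π' N' ≤ π' k := h1
      exact ⟨hπ'.le_iff_le.mp h1', (lt_fidx_iff hmono' hπ2top).mpr h2⟩
    · rintro ⟨h1, h2⟩
      exact ⟨hmono' h1, (lt_fidx_iff hmono' hπ2top).mp h2⟩
  have hLHS : ppP π F g t t' = ∑ j ∈ Finset.Ico N M,
      F (π N) (π j) * (g (min (π (j + 1)) t') - g (max (π j) t)) := by
    rw [ppP]
    exact (Equiv.tsum_eq (Equiv.subtypeEquivRight hpredL) _).trans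
      (Finset.tsum_subtype (Finset.Ico N M)
        (fun j => F (flr π t) (π j) * (g (min (π (j + 1)) t') - g (max (π j) t))))
  have hRHS : ppP π' (fun s u => F (flr π s) (flr π u)) g t t' = ∑ k ∈ Finset.Ico N' M',
      F (π N) (π (lastIdx π (π' k))) * (g (min (π' (k + 1)) t') - g (max (π' k) t)) := by
    rw [ppP]
    refine ((Equiv.tsum_eq (Equiv.subtypeEquivRight hpredR) _).trans
      (Finset.tsum_subtype (Finset.Ico N' M')
        (fun k => F (flr π (flr π' t)) (flr π (π' k)) *
          (g (min (π' (k + 1)) t') - g (max (π' k) t))))).trans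
      (Finset.sum_congr rfl fun k _ => ?_)
    rw [hflrflr]
    rfl
  rw [hLHS, hRHS]
  have hmaps : ∀ k ∈ Finset.Ico N' M', lastIdx π (π' k) ∈ Finset.Ico N M := by
    intro k hk
    rw [Finset.mem_Ico] at hk ⊢
    have hk0 : (0:ℝ) ≤ π' k := ha'0.trans (hmono' hk.1)
    constructor
    · exact (le_lastIdx_iff hπ hπ0 hπtop hk0).mpr (haa'.trans (hmono' hk.1))
    · have h1 : π (lastIdx π (π' k)) ≤ π' k := flr_le hπ hπ0 hπtop hk0
      have h2 : π' k < t' := (lt_fidx_iff hmono' hπ2top).mp hk.2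
      exact (lt_fidx_iff hmono hπtop).mpr (h1.trans_lt h2)
  rw [← Finset.sum_fiberwise_of_maps_to hmaps
    (fun k => F (π N) (π (lastIdx π (π' k))) * (g (min (π' (k + 1)) t') - g (max (π' k) t)))]
  refine Finset.sum_congr rfl fun j hj => ?_
  rw [Finset.mem_Ico] at hj
  have hjN : N ≤ j := hj.1
  have hπjt' : π j < t' := (lt_fidx_iff hmono hπtop).mp hj.2
  have hπj1t : t < π (j + 1) := htN1.trans_le (hmono (by omega))
  have hπ'f : π' (fidx π' (π j)) = π j :=
    fidx_of_mem_range hmono' hπ2top (hsub ⟨j, rfl⟩)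
  have hπ'f' : π' (fidx π' (π (j+1))) = π (j+1) :=
    fidx_of_mem_range hmono' hπ2top (hsub ⟨j+1, rfl⟩)
  have hfiber : (Finset.Ico N' M').filter (fun k => lastIdx π (π' k) = j)
      = Finset.Ico (max (fidx π' (π j)) N') (min (fidx π' (π (j+1))) M') := by
    ext k
    simp only [Finset.mem_filter, Finset.mem_Ico, max_le_iff, lt_min_iff]
    constructor
    · rintro ⟨⟨hk1, hk2⟩, hk3⟩
      have hk0 : (0:ℝ) ≤ π' k := ha'0.trans (hmono' hk1)
      have h := (lastIdx_eq_iff hπ hπ0 hπtop hk0).mp hk3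
      exact ⟨⟨(fidx_le_iff hmono' hπ2top).mpr h.1, hk1⟩,
        (lt_fidx_iff hmono' hπ2top).mpr h.2, hk2⟩
    · rintro ⟨⟨hk1, hk2⟩, hk3, hk4⟩
      have hk0 : (0:ℝ) ≤ π' k := ha'0.trans (hmono' hk2)
      refine ⟨⟨hk2, hk4⟩, (lastIdx_eq_iff hπ hπ0 hπtop hk0).mpr
        ⟨(fidx_le_iff hmono' hπ2top).mp hk1, (lt_fidx_iff hmono' hπ2top).mp hk3⟩⟩
  have ht'M' : t' ≤ π' M' := (fidx_le_iff hmono' hπ2top).mp le_rfl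
  have hk02 : max (fidx π' (π j)) N' ≤ min (fidx π' (π (j+1))) M' := by
    have h1 : fidx π' (π j) ≤ fidx π' (π (j+1)) :=
      (fidx_le_iff hmono' hπ2top).mpr (by rw [hπ'f']; exact hmono (Nat.le_succ j))
    have h2 : fidx π' (π j) ≤ M' :=
      (fidx_le_iff hmono' hπ2top).mpr (hπjt'.le.trans ht'M')
    have h3 : N' < fidx π' (π (j+1)) :=
      (lt_fidx_iff hmono' hπ2top).mpr (ha't.trans_lt hπj1t)
    have h4 : N' ≤ M' := by
      by_contra hc
      have : π' M' < π' N' := hπ' (by omega)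
      linarith
    exact max_le (le_min h1 h2) (le_min h3.le h4)
  have hterms : ∀ k ∈ Finset.Ico (max (fidx π' (π j)) N') (min (fidx π' (π (j+1))) M'),
      F (π N) (π (lastIdx π (π' k))) * (g (min (π' (k + 1)) t') - g (max (π' k) t))
      = F (π N) (π j) * (g (min (max (π' (k+1)) t) t') - g (min (max (π' k) t) t')) := by
    intro k hk
    rw [← hfiber] at hk
    obtain ⟨hk', hφk⟩ := Finset.mem_filter.mp hk
    rw [Finset.mem_Ico] at hk'
    have hπ'kt' : π' k < t' := (lt_fidx_iff hmono' hπ2top).mp hk'.2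
    have htπ'k1 : t < π' (k+1) := by
      by_contra hc
      have h := (le_lastIdx_iff hπ' hπ'0 hπ2top ht).mpr (le_of_not_gt hc)
      rw [← hN'] at h
      have := hk'.1
      omega
    rw [hφk, min_eq_left (max_le hπ'kt'.le htt'), max_eq_left htπ'k1.le]
  have htel : ∑ k ∈ Finset.Ico (max (fidx π' (π j)) N') (min (fidx π' (π (j+1))) M'),
      (g (min (max (π' (k+1)) t) t') - g (min (max (π' k) t) t'))
      = g (min (max (π' (min (fidx π' (π (j+1))) M')) t) t')
        - g (min (max (π' (max (fidx π' (π j)) N')) t) t') :=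
    sum_Ico_telescope (fun i => g (min (max (π' i) t) t')) hk02
  have hGk0 : min (max (π' (max (fidx π' (π j)) N')) t) t' = max (π j) t := by
    rcases le_total (fidx π' (π j)) N' with h | h
    · rw [max_eq_right h]
      have hπjN' : π j ≤ π' N' := by rw [← hπ'f]; exact hmono' h
      rw [max_eq_right ha't, min_eq_left htt', max_eq_right (hπjN'.trans ha't)]
    · rw [max_eq_left h, hπ'f, min_eq_left (max_le hπjt'.le htt')]
  have hGk2 : min (max (π' (min (fidx π' (π (j+1))) M')) t) t' = min (π (j+1)) t' := by
    rcases le_total (fidx π' (π (j+1))) M' with h | h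
    · rw [min_eq_left h, hπ'f', max_eq_left hπj1t.le]
    · rw [min_eq_right h]
      have h2 : t' ≤ π (j+1) := by rw [← hπ'f']; exact ht'M'.trans (hmono' h)
      rw [max_eq_left (htt'.trans ht'M'), min_eq_right ht'M', min_eq_right h2]
  rw [hfiber, Finset.sum_congr rfl hterms, ← Finset.mul_sum, htel, hGk0, hGk2]
end
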